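/- arXiv:2112.13881 — 4 statements merged into one kernel-verified Lean document; each statement's English description precedes it below -/
import Mathlib

section
/- If f : ℝ^d → [0,∞) and s > 0, then ∫_{ℝ^d} f(x) dx = (s/2) ∫_{K_s(f)} |⟨e_{d+1}, x⟩|^{s-1} dλ_{d+1}(x), where K_s(f) is the s-lifting of f. -/
open MeasureTheory Set

/-- The `s`-lifting of a nonnegative function on `ℝ^d`, as a subset of `ℝ^d × ℝ`. -/
noncomputable def sLift {d : ℕ} (s : ℝ) (f : EuclideanSpace ℝ (Fin d) → ℝ) :
    Set (EuclideanSpace ℝ (Fin d) × ℝ) :=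
  {p | p.1 ∈ closure (Function.support f) ∧ |p.2| ≤ f p.1 ^ (1 / s)}

/-!
Cavalieri/Tonelli: slice `K_s(f)` along the last coordinate. The fibre over `x` is the interval
`[-f(x)^{1/s}, f(x)^{1/s}]` (empty off the closure of the support, where `f(x) = 0`), on which
`|t|^{s-1}` integrates to `2 f(x) / s`. The identity is proved between lower Lebesgue integrals,
so it survives the passage to Bochner integrals even when `f` is not integrable: then both sides
are `0`.
-/

theorem intervalIntegrable_abs_rpow {r : ℝ} (hr : -1 < r) (a b : ℝ) :
    IntervalIntegrable (fun t : ℝ => |t| ^ r) volume a b := by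
  have h_nonneg : ∀ c : ℝ, 0 ≤ c → IntervalIntegrable (fun t : ℝ => |t| ^ r) volume 0 c :=
    fun c hc => (intervalIntegral.intervalIntegrable_rpow' hr).congr fun t ht => by
      rw [uIoc_of_le hc] at ht
      simp only [abs_of_pos ht.1]
  have h_from_zero : ∀ c : ℝ, IntervalIntegrable (fun t : ℝ => |t| ^ r) volume 0 c := by
    intro c
    rcases le_total 0 c with hc | hc
    · exact h_nonneg c hc
    · rw [IntervalIntegrable.iff_comp_neg]
      simpa using h_nonneg (-c) (by linarith)
  exact (h_from_zero a).symm.trans (h_from_zero b)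

theorem intervalIntegral.integral_neg_self_abs_rpow {s a : ℝ} (hs : 0 < s) (ha : 0 ≤ a) :
    ∫ t in (-a)..a, |t| ^ (s - 1) = 2 * a ^ s / s := by
  have h_pos : ∫ t in (0 : ℝ)..a, |t| ^ (s - 1) = a ^ s / s := by
    rw [intervalIntegral.integral_congr (g := fun t : ℝ => t ^ (s - 1)) fun t ht => by
        rw [uIcc_of_le ha] at ht
        simp only [abs_of_nonneg ht.1],
      integral_rpow (Or.inl (by linarith)), sub_add_cancel, Real.zero_rpow hs.ne', sub_zero]
  have h_neg : ∫ t in (-a)..0, |t| ^ (s - 1) = a ^ s / s := by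
    simpa [h_pos] using (intervalIntegral.integral_comp_neg (a := 0) (b := a)
      (fun t : ℝ => |t| ^ (s - 1))).symm
  have h_int := intervalIntegrable_abs_rpow (r := s - 1) (by linarith)
  rw [← intervalIntegral.integral_add_adjacent_intervals (h_int _ _) (h_int _ _), h_neg, h_pos]
  ring

theorem lintegral_Icc_neg_self_abs_rpow {s a : ℝ} (hs : 0 < s) (ha : 0 ≤ a) :
    ∫⁻ t in Icc (-a) a, ENNReal.ofReal (|t| ^ (s - 1)) = ENNReal.ofReal (2 * a ^ s / s) := by
  have h_le : -a ≤ a := by linarith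
  have h_int : IntegrableOn (fun t : ℝ => |t| ^ (s - 1)) (Icc (-a) a) :=
    (intervalIntegrable_iff_integrableOn_Icc_of_le h_le).mp
      (intervalIntegrable_abs_rpow (by linarith) _ _)
  rw [← ofReal_integral_eq_lintegral_ofReal h_int (ae_of_all _ fun t => by positivity),
    integral_Icc_eq_integral_Ioc, ← intervalIntegral.integral_of_le h_le,
    intervalIntegral.integral_neg_self_abs_rpow hs ha]

theorem setLIntegral_prod_eq_lintegral_preimage_mk {α β : Type*} [MeasurableSpace α]
    [MeasurableSpace β] {μ : Measure α} {ν : Measure β} [SFinite ν] {K : Set (α × β)}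
    (hK : MeasurableSet K) {g : α × β → ENNReal} (hg : Measurable g) :
    ∫⁻ p in K, g p ∂μ.prod ν =
      ∫⁻ x, ∫⁻ y in Prod.mk x ⁻¹' K, g (x, y) ∂ν ∂μ := by
  rw [← lintegral_indicator hK, lintegral_prod _ (hg.indicator hK).aemeasurable]
  refine lintegral_congr fun x => ?_
  rw [← lintegral_indicator (measurable_prodMk_left hK)]
  rfl

section sLift

variable {d : ℕ} {s : ℝ} {f : EuclideanSpace ℝ (Fin d) → ℝ}

theorem measurableSet_sLift (hf : Measurable f) : MeasurableSet (sLift s f) :=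
  (isClosed_closure.measurableSet.preimage measurable_fst).inter
    (measurableSet_le measurable_snd.abs ((hf.comp measurable_fst).pow_const _))

theorem preimage_mk_sLift_of_mem {x : EuclideanSpace ℝ (Fin d)}
    (hx : x ∈ closure (Function.support f)) :
    Prod.mk x ⁻¹' sLift s f = Icc (-(f x ^ (1 / s))) (f x ^ (1 / s)) := by
  ext t
  simp [sLift, hx, abs_le]

theorem preimage_mk_sLift_of_notMem {x : EuclideanSpace ℝ (Fin d)}
    (hx : x ∉ closure (Function.support f)) : Prod.mk x ⁻¹' sLift s f = ∅ := by
  ext t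
  simp [sLift, hx]

theorem lintegral_preimage_mk_sLift (hs : 0 < s) {x : EuclideanSpace ℝ (Fin d)}
    (hfx : 0 ≤ f x) :
    ∫⁻ t in Prod.mk x ⁻¹' sLift s f, ENNReal.ofReal (|t| ^ (s - 1)) =
      ENNReal.ofReal (2 / s) * ENNReal.ofReal (f x) := by
  by_cases hx : x ∈ closure (Function.support f)
  · rw [preimage_mk_sLift_of_mem hx, lintegral_Icc_neg_self_abs_rpow hs (by positivity),
      ← Real.rpow_mul hfx, one_div_mul_cancel hs.ne', Real.rpow_one,
      ← ENNReal.ofReal_mul (by positivity), div_mul_eq_mul_div]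
  · have hfx_zero : f x = 0 := Function.notMem_support.mp fun h => hx (subset_closure h)
    simp [preimage_mk_sLift_of_notMem hx, hfx_zero]

theorem lintegral_sLift_abs_rpow (hs : 0 < s) (hf : ∀ x, 0 ≤ f x) (hmeas : Measurable f) :
    ∫⁻ p in sLift s f, ENNReal.ofReal (|p.2| ^ (s - 1)) =
      ENNReal.ofReal (2 / s) * ∫⁻ x, ENNReal.ofReal (f x) := by
  rw [Measure.volume_eq_prod, setLIntegral_prod_eq_lintegral_preimage_mk (measurableSet_sLift hmeas)
    (by fun_prop)]
  simp_rw [lintegral_preimage_mk_sLift hs (hf _)]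
  exact lintegral_const_mul _ hmeas.ennreal_ofReal

end sLift

/-- `∫_{ℝ^d} f = (s/2) ∫_{K_s(f)} |⟨e_{d+1}, x⟩|^{s-1} dλ_{d+1}(x)`. -/
theorem integral_eq_sLift_integral (d : ℕ) (s : ℝ) (hs : 0 < s)
    (f : EuclideanSpace ℝ (Fin d) → ℝ) (hf : ∀ x, 0 ≤ f x) (hmeas : Measurable f) :
    ∫ x, f x = (s / 2) * ∫ p in sLift s f, |p.2| ^ (s - 1) := by
  rw [integral_eq_lintegral_of_nonneg_ae (ae_of_all _ hf) hmeas.aestronglyMeasurable,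
    integral_eq_lintegral_of_nonneg_ae (ae_of_all _ fun p => by positivity)
      (measurable_snd.abs.pow_const _).aestronglyMeasurable,
    lintegral_sLift_abs_rpow hs hf hmeas, ENNReal.toReal_mul, ENNReal.toReal_ofReal (by positivity)]
  field_simp
end

section
/- Fix s > 0 and let K be a d-symmetric convex body in ℝ^{d+1} containing the origin in its interior. Then the function z ↦ (s/(2(d+s))) ∫_{S^d} |⟨e_{d+1}, u⟩|^{s-1} / h_{K-z}(u)^{d+s} dσ(u) is convex on the interior of K. -/
open MeasureTheory Set Metric

/-- The support function of a set. -/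
noncomputable def suppFn {d : ℕ} (K : Set (EuclideanSpace ℝ (Fin d)))
    (u : EuclideanSpace ℝ (Fin d)) : ℝ :=
  sSup ((fun x => (inner ℝ x u : ℝ)) '' K)

/-!
For `z` in the interior of `K` the translate satisfies `h_{K-z}(u) = h_K(u) - ⟪z, u⟫ > 0`, so each
integrand is a nonnegative multiple of `t ↦ t ^ (-(d + s))`, convex on `t > 0`, composed with
an affine function of `z`; integrating preserves convexity. The denominators are continuous and
positive on the compact sphere, hence bounded above and away from `0`, so the integrals are either
all finite or all equal to the junk value `0`.
-/

open scoped RealInnerProductSpace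

section SupportFunction

variable {n : ℕ} {K : Set (EuclideanSpace ℝ (Fin n))}

theorem suppFn_image_sub (hK : K.Nonempty) {u : EuclideanSpace ℝ (Fin n)}
    (hKu : BddAbove ((⟪·, u⟫) '' K)) (z : EuclideanSpace ℝ (Fin n)) :
    suppFn ((· - z) '' K) u = suppFn K u - ⟪z, u⟫ := by
  have h := (OrderIso.subRight ⟪z, u⟫).map_csSup' (hK.image _) hKu
  rw [image_image] at h
  simp only [suppFn, image_image, inner_sub_left]
  exact h.symm

theorem IsCompact.continuous_suppFn (hK : IsCompact K) : Continuous (suppFn K) :=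
  hK.continuous_sSup (continuous_snd.inner continuous_fst)

theorem inner_lt_suppFn_of_mem_interior {u z : EuclideanSpace ℝ (Fin n)}
    (hKu : BddAbove ((⟪·, u⟫) '' K)) (hz : z ∈ interior K) (hu : u ≠ 0) :
    ⟪z, u⟫ < suppFn K u := by
  have hnear : ∀ᶠ t : ℝ in nhdsWithin 0 (Ioi 0), z + t • u ∈ K := by
    refine nhdsWithin_le_nhds (Filter.Tendsto.eventually_mem ?_ (mem_interior_iff_mem_nhds.1 hz))
    exact (continuous_const.add (continuous_id.smul continuous_const)).tendsto' 0 z (by simp)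
  obtain ⟨t, hzt, ht⟩ := (hnear.and self_mem_nhdsWithin).exists
  calc ⟪z, u⟫ < ⟪z, u⟫ + t * ‖u‖ ^ 2 := lt_add_of_pos_right _ (by positivity)
    _ = ⟪z + t • u, u⟫ := by rw [inner_add_left, real_inner_smul_left, real_inner_self_eq_norm_sq]
    _ ≤ suppFn K u := le_csSup hKu (mem_image_of_mem _ hzt)

end SupportFunction

theorem convexOn_rpow_neg {p : ℝ} (hp : 0 ≤ p) : ConvexOn ℝ (Ioi 0) fun x : ℝ => x ^ (-p) := by
  refine ⟨convex_Ioi 0, fun x (hx : 0 < x) y (hy : 0 < y) a b ha hb hab => ?_⟩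
  simp only [smul_eq_mul]
  calc (a * x + b * y) ^ (-p) ≤ (x ^ a * y ^ b) ^ (-p) :=
        Real.rpow_le_rpow_of_nonpos (by positivity)
          (Real.geom_mean_le_arith_mean2_weighted ha hb hx.le hy.le hab) (neg_nonpos.2 hp)
    _ = (x ^ (-p)) ^ a * (y ^ (-p)) ^ b := by
        rw [Real.mul_rpow (by positivity) (by positivity), ← Real.rpow_mul hx.le,
          ← Real.rpow_mul hy.le, ← Real.rpow_mul hx.le, ← Real.rpow_mul hy.le,
          mul_comm a, mul_comm b]
    _ ≤ a * x ^ (-p) + b * y ^ (-p) :=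
        Real.geom_mean_le_arith_mean2_weighted ha hb (by positivity) (by positivity) hab

theorem convexOn_rpow_neg_sub_inner {E : Type*} [NormedAddCommGroup E] [InnerProductSpace ℝ E]
    {p : ℝ} (hp : 0 ≤ p) (c : ℝ) (u : E) :
    ConvexOn ℝ {z | ⟪z, u⟫ < c} fun z => (c - ⟪z, u⟫) ^ (-p) := by
  set g : E →ᵃ[ℝ] ℝ := AffineMap.const ℝ E c - (innerₛₗ ℝ u).toAffineMap
  have hg : ∀ z, g z = c - ⟪z, u⟫ := fun z => by simp [g, real_inner_comm]
  have h := (convexOn_rpow_neg hp).comp_affineMap g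
  simp only [preimage, mem_Ioi, hg, sub_pos, Function.comp_def] at h
  exact h

theorem convexOn_integral {E α : Type*} [AddCommGroup E] [Module ℝ E] [MeasurableSpace α]
    {μ : Measure α} {s : Set E} {f : E → α → ℝ} (hs : Convex ℝ s)
    (hf : ∀ a, ConvexOn ℝ s (f · a))
    (hint : ∀ x ∈ s, ∀ y ∈ s, Integrable (f x) μ → Integrable (f y) μ) :
    ConvexOn ℝ s fun x => ∫ a, f x a ∂μ := by
  by_cases h : ∃ x ∈ s, Integrable (f x) μ
  · obtain ⟨x₀, hx₀, hi⟩ := h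
    have hI : ∀ y ∈ s, Integrable (f y) μ := fun y hy => hint x₀ hx₀ y hy hi
    refine ⟨hs, fun x hx y hy a b ha hb hab => ?_⟩
    calc ∫ u, f (a • x + b • y) u ∂μ ≤ ∫ u, (a * f x u + b * f y u) ∂μ :=
          integral_mono (hI _ (hs hx hy ha hb hab))
            (((hI x hx).const_mul a).add ((hI y hy).const_mul b))
            fun u => (hf u).2 hx hy ha hb hab
      _ = a • ∫ u, f x u ∂μ + b • ∫ u, f y u ∂μ := by
          rw [integral_add ((hI x hx).const_mul a) ((hI y hy).const_mul b), integral_const_mul,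
            integral_const_mul, smul_eq_mul, smul_eq_mul]
  · push Not at h
    exact (convexOn_const 0 hs).congr fun x hx => (integral_undef (h x hx)).symm

section CompactSpace

variable {α : Type*} [TopologicalSpace α] [CompactSpace α] [MeasurableSpace α]
  [OpensMeasurableSpace α] {μ : Measure α} {w φ : α → ℝ}

theorem MeasureTheory.Integrable.mul_continuous_of_compactSpace (hw : Integrable w μ)
    (hφ : Continuous φ) : Integrable (fun a => w a * φ a) μ := by
  obtain ⟨C, hC⟩ := isCompact_univ.exists_bound_of_continuousOn hφ.continuousOn
  exact hw.mul_bdd hφ.aestronglyMeasurable (ae_of_all _ fun a => hC a (mem_univ a))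

theorem integrable_mul_continuous_iff (hφ : Continuous φ) (hφ₀ : ∀ a, φ a ≠ 0) :
    Integrable (fun a => w a * φ a) μ ↔ Integrable w μ := by
  refine ⟨fun h => ?_, fun h => h.mul_continuous_of_compactSpace hφ⟩
  convert h.mul_continuous_of_compactSpace (hφ.inv₀ hφ₀) using 2 with a
  rw [mul_assoc, Pi.inv_apply, mul_inv_cancel₀ (hφ₀ a), mul_one]

end CompactSpace

theorem convexOn_integral_div_suppFn_image_sub_rpow {n : ℕ} {K : Set (EuclideanSpace ℝ (Fin n))}
    (hK : IsCompact K) (hKc : Convex ℝ K) {p : ℝ} (hp : 0 ≤ p)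
    (μ : Measure (sphere (0 : EuclideanSpace ℝ (Fin n)) 1))
    {w : sphere (0 : EuclideanSpace ℝ (Fin n)) 1 → ℝ} (hw : 0 ≤ w) :
    ConvexOn ℝ (interior K) fun z => ∫ u, w u / suppFn ((· - z) '' K) u ^ p ∂μ := by
  have hbdd (u : EuclideanSpace ℝ (Fin n)) : BddAbove ((⟪·, u⟫) '' K) :=
    hK.bddAbove_image (continuous_id.inner continuous_const).continuousOn
  have hpos {z : EuclideanSpace ℝ (Fin n)} (hz : z ∈ interior K)
      (u : sphere (0 : EuclideanSpace ℝ (Fin n)) 1) : 0 < suppFn K u - ⟪z, u⟫ :=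
    sub_pos.2 (inner_lt_suppFn_of_mem_interior (hbdd u) hz (ne_zero_of_mem_unit_sphere u))
  have hint {z : EuclideanSpace ℝ (Fin n)} (hz : z ∈ interior K) :
      Integrable (fun u => w u * (suppFn K u - ⟪z, u⟫) ^ (-p)) μ ↔ Integrable w μ :=
    have hcont : Continuous fun u : sphere (0 : EuclideanSpace ℝ (Fin n)) 1 =>
        suppFn K u - ⟪z, u⟫ :=
      (hK.continuous_suppFn.comp continuous_subtype_val).sub
        (continuous_const.inner continuous_subtype_val)
    integrable_mul_continuous_iff (hcont.rpow_const fun u => .inl (hpos hz u).ne')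
      fun u => (Real.rpow_pos_of_pos (hpos hz u) _).ne'
  have hconv : ConvexOn ℝ (interior K) fun z => ∫ u, w u * (suppFn K u - ⟪z, u⟫) ^ (-p) ∂μ :=
    convexOn_integral hKc.interior
      (fun u => ((convexOn_rpow_neg_sub_inner hp _ _).subset (fun z hz => sub_pos.1 (hpos hz u))
        hKc.interior).smul (hw u))
      fun z hz y hy h => (hint hy).2 ((hint hz).1 h)
  refine hconv.congr fun z hz => integral_congr_ae (ae_of_all _ fun u => ?_)
  dsimp only
  rw [suppFn_image_sub ⟨z, interior_subset hz⟩ (hbdd u), Real.rpow_neg (hpos hz u).le,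
    div_eq_mul_inv]

theorem convexOn_integral_sPolar_general (d : ℕ) (s : ℝ) (hs : 0 < s)
    (K : Set (EuclideanSpace ℝ (Fin (d + 1))))
    (hKcomp : IsCompact K) (hKconv : Convex ℝ K) :
    ConvexOn ℝ (interior K) (fun z =>
      (s / (2 * ((d : ℝ) + s))) *
        ∫ u : Metric.sphere (0 : EuclideanSpace ℝ (Fin (d + 1))) 1,
          |(inner ℝ (EuclideanSpace.single (Fin.last d) (1 : ℝ))
              (u : EuclideanSpace ℝ (Fin (d + 1))) : ℝ)| ^ (s - 1) /
            suppFn ((fun x => x - z) '' K) (u : EuclideanSpace ℝ (Fin (d + 1)))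
              ^ ((d : ℝ) + s)
          ∂(volume : Measure (EuclideanSpace ℝ (Fin (d + 1)))).toSphere) :=
  (convexOn_integral_div_suppFn_image_sub_rpow hKcomp hKconv (by positivity) _
    fun _ => Real.rpow_nonneg (abs_nonneg _) _).smul (by positivity)

/-- For a `d`-symmetric convex body `K ⊆ ℝ^{d+1}` with the origin in its interior,
the functional `z ↦ (s/(2(d+s))) ∫_{S^d} |⟨e_{d+1},u⟩|^{s-1} / h_{K-z}(u)^{d+s} dσ(u)`
is convex on the interior of `K`. -/
theorem convexOn_integral_sPolar (d : ℕ) (s : ℝ) (hs : 0 < s)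
    (K : Set (EuclideanSpace ℝ (Fin (d + 1))))
    (hKcomp : IsCompact K) (hKconv : Convex ℝ K)
    (hKint : (0 : EuclideanSpace ℝ (Fin (d + 1))) ∈ interior K)
    (hsymm : ∀ x ∈ K,
      (WithLp.toLp 2 (fun i => if i = Fin.last d then -x i else x i) :
        EuclideanSpace ℝ (Fin (d + 1))) ∈ K) :
    ConvexOn ℝ (interior K) (fun z =>
      (s / (2 * ((d : ℝ) + s))) *
        ∫ u : Metric.sphere (0 : EuclideanSpace ℝ (Fin (d + 1))) 1,
          |(inner ℝ (EuclideanSpace.single (Fin.last d) (1 : ℝ))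
              (u : EuclideanSpace ℝ (Fin (d + 1))) : ℝ)| ^ (s - 1) /
            suppFn ((fun x => x - z) '' K) (u : EuclideanSpace ℝ (Fin (d + 1)))
              ^ ((d : ℝ) + s)
          ∂(volume : Measure (EuclideanSpace ℝ (Fin (d + 1)))).toSphere) :=
  convexOn_integral_sPolar_general d s hs K hKcomp hKconv
end

section
/- Fix s > 0. Let φ₁, φ₂ : [0,∞) → [0,∞) be Borel functions satisfying φ₁(t₁)φ₂(t₂) ≤ [max(1 - t₁t₂, 0)]^s for all t₁, t₂ ≥ 0. Then ∫_{[0,∞)} φ₁ · ∫_{[0,∞)} φ₂ ≤ (κ_s(2)/2)², where κ_s(2) = ∫_{-1}^{1} (1 - t²)^{s/2} dt. -/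
/-!
Substituting `t = exp u` turns `φᵢ` into `F u = exp u * φ₁ (exp u)`, `G v = exp v * φ₂ (exp v)`,
and the hypothesis into `F u * G v ≤ H ((u + v) / 2) ^ 2` with `H w = exp w * h (exp w)`,
`h t = max (1 - t ^ 2) 0 ^ (s / 2)`, because `h √(t₁ t₂) ^ 2 = max (1 - t₁ t₂) 0 ^ s`.
The claim is then the one-dimensional Prékopa–Leindler inequality `∫ F * ∫ G ≤ (∫ H) ^ 2`,
since `∫_{(0,∞)} h = κ_s(2) / 2` by evenness.

Prékopa–Leindler is proved in the classical way. Superlevel sets satisfy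
`{F > c} + {G > c} ⊆ 2 • {H > c}`, so the one-dimensional Brunn–Minkowski inequality and the
layer-cake formula give `∫ F + ∫ G ≤ 2 ∫ H` as soon as `F` and `G` have the same supremum.
Rescaling `F` by a constant `r` (and `H` by `√r`) arranges this, AM–GM turns the sum into a
product, and truncation removes the finiteness assumption on the suprema.
-/

open MeasureTheory Set ENNReal
open scoped NNReal Pointwise

theorem ENNReal.mul_le_sq_of_add_le_two_mul {a b c : ℝ≥0∞} (h : a + b ≤ 2 * c) :
    a * b ≤ c ^ 2 := by
  rcases eq_or_ne c ∞ with rfl | hc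
  · simp
  have ha : a ≠ ∞ := ne_top_of_le_ne_top (by finiteness) (le_self_add.trans h)
  have hb : b ≠ ∞ := ne_top_of_le_ne_top (by finiteness) (le_add_self.trans h)
  lift a to ℝ≥0 using ha
  lift b to ℝ≥0 using hb
  lift c to ℝ≥0 using hc
  norm_cast at h ⊢
  refine le_of_mul_le_mul_left ?_ (four_pos : (0 : ℝ≥0) < 4)
  calc 4 * (a * b) = 4 * a * b := (mul_assoc _ _ _).symm
    _ ≤ (a + b) ^ 2 := four_mul_le_sq_add a b
    _ ≤ (2 * c) ^ 2 := by gcongr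
    _ = 4 * c ^ 2 := by ring

theorem MeasureTheory.lintegral_ofReal_eq_iSup_lintegral_min {α : Type*} [MeasurableSpace α]
    {μ : Measure α} {f : α → ℝ} (hf : Measurable f) :
    ∫⁻ x, ENNReal.ofReal (f x) ∂μ = ⨆ n : ℕ, ∫⁻ x, ENNReal.ofReal (min (f x) n) ∂μ := by
  rw [← lintegral_iSup (fun n => (hf.min measurable_const).ennreal_ofReal)
    fun m n hmn x => ENNReal.ofReal_le_ofReal (min_le_min_left _ (Nat.cast_le.2 hmn))]
  congr 1 with x
  simp_rw [ENNReal.ofReal_min, ENNReal.ofReal_natCast, ← inf_iSup_eq, ENNReal.iSup_natCast,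
    inf_top_eq]

namespace Real

theorem volume_add_volume_le_volume_add_of_isCompact {K L : Set ℝ} (hK : IsCompact K)
    (hL : IsCompact L) (hK₀ : K.Nonempty) (hL₀ : L.Nonempty) :
    volume K + volume L ≤ volume (K + L) := by
  set X := K + {sSup L}
  set Y := {sInf K} + L
  have hXY : X ∩ Y ⊆ {sInf K + sSup L} := by
    rintro _ ⟨⟨k, hk, _, rfl, rfl⟩, ⟨_, rfl, l, hl, hkl⟩⟩
    have := csInf_le hK.bddBelow hk
    have := le_csSup hL.bddAbove hl
    rw [mem_singleton_iff]
    linarith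
  calc volume K + volume L = volume X + volume Y := by
        simp [X, Y, add_singleton, singleton_add, measure_preimage_add_right]
    _ = volume (X ∪ Y) + volume (X ∩ Y) :=
        (measure_union_add_inter _ (isCompact_singleton.add hL).measurableSet).symm
    _ = volume (X ∪ Y) := by rw [measure_mono_null hXY (measure_singleton _), add_zero]
    _ ≤ volume (K + L) := measure_mono <| union_subset
        (add_subset_add_left (singleton_subset_iff.2 (hL.sSup_mem hL₀)))
        (add_subset_add_right (singleton_subset_iff.2 (hK.sInf_mem hK₀)))

theorem volume_add_volume_le_volume_add {A B : Set ℝ} (hA : MeasurableSet A)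
    (hB : MeasurableSet B) (hA₀ : A.Nonempty) (hB₀ : B.Nonempty) :
    volume A + volume B ≤ volume (A + B) := by
  obtain ⟨a, ha⟩ := hA₀
  obtain ⟨b, hb⟩ := hB₀
  rw [hA.measure_eq_iSup_isCompact, hB.measure_eq_iSup_isCompact]
  simp_rw [iSup_and']
  refine ENNReal.biSup_add_biSup_le' ⟨∅, empty_subset _, isCompact_empty⟩
    ⟨∅, empty_subset _, isCompact_empty⟩ fun K ⟨hKA, hK⟩ L ⟨hLB, hL⟩ => ?_
  calc volume K + volume L ≤ volume (insert a K) + volume (insert b L) := by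
        gcongr <;> exact subset_insert _ _
    _ ≤ volume (insert a K + insert b L) :=
        volume_add_volume_le_volume_add_of_isCompact (hK.insert a) (hL.insert b)
          (insert_nonempty _ _) (insert_nonempty _ _)
    _ ≤ volume (A + B) :=
        measure_mono (add_subset_add (insert_subset ha hKA) (insert_subset hb hLB))

theorem volume_superlevel_add_le {F G H : ℝ → ℝ} (hF : Measurable F) (hG : Measurable G)
    (hH₀ : ∀ w, 0 ≤ H w) (hFGH : ∀ u v, F u * G v ≤ H ((u + v) / 2) ^ 2) {c : ℝ} (hc : 0 < c)
    (hF₀ : {u | c < F u}.Nonempty) (hG₀ : {v | c < G v}.Nonempty) :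
    volume {u | c < F u} + volume {v | c < G v} ≤ 2 * volume {w | c < H w} := by
  have hsub : {u | c < F u} + {v | c < G v} ⊆ (2 : ℝ) • {w | c < H w} := by
    rintro _ ⟨u, hu, v, hv, rfl⟩
    rw [mem_smul_set_iff_inv_smul_mem₀ two_ne_zero, smul_eq_mul, inv_mul_eq_div]
    refine lt_of_pow_lt_pow_left₀ 2 (hH₀ _) ?_
    calc c ^ 2 = c * c := sq c
      _ < F u * G v := mul_lt_mul'' hu hv hc.le hc.le
      _ ≤ H ((u + v) / 2) ^ 2 := hFGH u v
  calc volume {u | c < F u} + volume {v | c < G v}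
      ≤ volume ({u | c < F u} + {v | c < G v}) :=
        volume_add_volume_le_volume_add (measurableSet_lt measurable_const hF)
          (measurableSet_lt measurable_const hG) hF₀ hG₀
    _ ≤ volume ((2 : ℝ) • {w | c < H w}) := measure_mono hsub
    _ = 2 * volume {w | c < H w} := by simp

theorem superlevel_nonempty_iff_lt_iSup {F : ℝ → ℝ} {c : ℝ} (hc : 0 ≤ c) :
    {u | c < F u}.Nonempty ↔ ENNReal.ofReal c < ⨆ u, ENNReal.ofReal (F u) := by
  simp only [lt_iSup_iff, ENNReal.ofReal_lt_ofReal_iff', Set.Nonempty, mem_ofPred_eq]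
  exact exists_congr fun u => ⟨fun h => ⟨h, hc.trans_lt h⟩, And.left⟩

theorem lintegral_add_le_two_mul_of_iSup_eq {F G H : ℝ → ℝ} (hF₀ : ∀ u, 0 ≤ F u)
    (hG₀ : ∀ v, 0 ≤ G v) (hH₀ : ∀ w, 0 ≤ H w) (hF : Measurable F) (hG : Measurable G)
    (hH : Measurable H) (hFGH : ∀ u v, F u * G v ≤ H ((u + v) / 2) ^ 2)
    (hsup : ⨆ u, ENNReal.ofReal (F u) = ⨆ v, ENNReal.ofReal (G v)) :
    (∫⁻ u, ENNReal.ofReal (F u)) + ∫⁻ v, ENNReal.ofReal (G v) ≤ 2 * ∫⁻ w, ENNReal.ofReal (H w) := by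
  have hlevel : ∀ c ∈ Ioi (0 : ℝ),
      volume {u | c < F u} + volume {v | c < G v} ≤ 2 * volume {w | c < H w} := by
    intro c hc
    have hiff : {u | c < F u}.Nonempty ↔ {v | c < G v}.Nonempty := by
      rw [superlevel_nonempty_iff_lt_iSup hc.le, hsup, superlevel_nonempty_iff_lt_iSup hc.le]
    by_cases hFc : {u | c < F u}.Nonempty
    · exact volume_superlevel_add_le hF hG hH₀ hFGH hc hFc (hiff.1 hFc)
    · have hGc := mt hiff.2 hFc
      simp [not_nonempty_iff_eq_empty.1 hFc, not_nonempty_iff_eq_empty.1 hGc]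
  simp only [lintegral_eq_lintegral_meas_lt volume (ae_of_all _ hF₀) hF.aemeasurable,
    lintegral_eq_lintegral_meas_lt volume (ae_of_all _ hG₀) hG.aemeasurable,
    lintegral_eq_lintegral_meas_lt volume (ae_of_all _ hH₀) hH.aemeasurable]
  calc _ ≤ ∫⁻ c in Ioi 0, volume {u | c < F u} + volume {v | c < G v} := le_lintegral_add _ _
    _ ≤ ∫⁻ c in Ioi 0, 2 * volume {w | c < H w} := setLIntegral_mono' measurableSet_Ioi hlevel
    _ = 2 * ∫⁻ c in Ioi 0, volume {w | c < H w} := lintegral_const_mul' _ _ ofNat_ne_top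

theorem lintegral_mul_le_sq_of_iSup_ne_top {F G H : ℝ → ℝ} (hF₀ : ∀ u, 0 ≤ F u)
    (hG₀ : ∀ v, 0 ≤ G v) (hH₀ : ∀ w, 0 ≤ H w) (hF : Measurable F) (hG : Measurable G)
    (hH : Measurable H) (hFGH : ∀ u v, F u * G v ≤ H ((u + v) / 2) ^ 2)
    (hFsup : ⨆ u, ENNReal.ofReal (F u) ≠ ∞) (hGsup : ⨆ v, ENNReal.ofReal (G v) ≠ ∞) :
    (∫⁻ u, ENNReal.ofReal (F u)) * ∫⁻ v, ENNReal.ofReal (G v)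
      ≤ (∫⁻ w, ENNReal.ofReal (H w)) ^ 2 := by
  set a := ⨆ u, ENNReal.ofReal (F u)
  set b := ⨆ v, ENNReal.ofReal (G v)
  rcases eq_or_ne a 0 with ha | ha
  · simp [ENNReal.iSup_eq_zero.1 ha]
  rcases eq_or_ne b 0 with hb | hb
  · simp [ENNReal.iSup_eq_zero.1 hb]
  set r := (b / a).toReal
  have hba : b / a ≠ ∞ := by simp [ENNReal.div_eq_top, ha, hGsup]
  have hr : 0 < r := ENNReal.toReal_pos (by simp [ENNReal.div_eq_zero_iff, hFsup, hb]) hba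
  have hr' : ENNReal.ofReal r = b / a := ENNReal.ofReal_toReal hba
  have hsup : ⨆ u, ENNReal.ofReal (r * F u) = b := by
    simp_rw [ENNReal.ofReal_mul hr.le]
    rw [← ENNReal.mul_iSup, hr', ENNReal.div_mul_cancel ha hFsup]
  have hFGH' : ∀ u v, r * F u * G v ≤ (√r * H ((u + v) / 2)) ^ 2 := by
    intro u v
    rw [mul_pow, sq_sqrt hr.le, mul_assoc]
    exact mul_le_mul_of_nonneg_left (hFGH u v) hr.le
  have key := lintegral_add_le_two_mul_of_iSup_eq (fun u => mul_nonneg hr.le (hF₀ u)) hG₀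
    (fun w => mul_nonneg (sqrt_nonneg r) (hH₀ w)) (hF.const_mul r) hG (hH.const_mul √r)
    hFGH' hsup
  simp_rw [ENNReal.ofReal_mul hr.le, ENNReal.ofReal_mul (sqrt_nonneg r),
    lintegral_const_mul' _ _ ofReal_ne_top] at key
  have := ENNReal.mul_le_sq_of_add_le_two_mul key
  rw [mul_pow, ← ENNReal.ofReal_pow (sqrt_nonneg r), sq_sqrt hr.le, mul_assoc] at this
  exact (ENNReal.mul_le_mul_iff_right (by simpa using hr) ofReal_ne_top).1 this

theorem lintegral_mul_le_sq {F G H : ℝ → ℝ} (hF₀ : ∀ u, 0 ≤ F u)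
    (hG₀ : ∀ v, 0 ≤ G v) (hH₀ : ∀ w, 0 ≤ H w) (hF : Measurable F) (hG : Measurable G)
    (hH : Measurable H) (hFGH : ∀ u v, F u * G v ≤ H ((u + v) / 2) ^ 2) :
    (∫⁻ u, ENNReal.ofReal (F u)) * ∫⁻ v, ENNReal.ofReal (G v)
      ≤ (∫⁻ w, ENNReal.ofReal (H w)) ^ 2 := by
  have hsup_min : ∀ (f : ℝ → ℝ) (n : ℕ), ⨆ x, ENNReal.ofReal (min (f x) n) ≠ ∞ :=
    fun f n => ne_top_of_le_ne_top ofReal_ne_top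
      (iSup_le fun x => ENNReal.ofReal_le_ofReal (min_le_right _ _))
  rw [lintegral_ofReal_eq_iSup_lintegral_min hF, lintegral_ofReal_eq_iSup_lintegral_min hG,
    ENNReal.iSup_mul]
  refine iSup_le fun m => ?_
  rw [ENNReal.mul_iSup]
  refine iSup_le fun n => ?_
  refine lintegral_mul_le_sq_of_iSup_ne_top (fun u => le_min (hF₀ u) m.cast_nonneg)
    (fun v => le_min (hG₀ v) n.cast_nonneg) hH₀ (hF.min measurable_const)
    (hG.min measurable_const) hH (fun u v => ?_) (hsup_min F m) (hsup_min G n)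
  exact (mul_le_mul (min_le_left _ _) (min_le_left _ _) (le_min (hG₀ v) n.cast_nonneg)
    (hF₀ u)).trans (hFGH u v)

theorem lintegral_Ioi_eq_lintegral_exp_mul (g : ℝ → ℝ≥0∞) :
    ∫⁻ t in Ioi 0, g t = ∫⁻ u, ENNReal.ofReal (exp u) * g (exp u) := by
  have := lintegral_image_eq_lintegral_abs_deriv_mul MeasurableSet.univ
    (fun u _ => (hasDerivAt_exp u).hasDerivWithinAt) exp_injective.injOn g
  simpa [image_univ, range_exp, abs_of_pos (exp_pos _)] using this

theorem lintegral_Ioi_mul_le_sq {f₁ f₂ h : ℝ → ℝ} (hf₁₀ : ∀ t, 0 ≤ f₁ t)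
    (hf₂₀ : ∀ t, 0 ≤ f₂ t) (hh₀ : ∀ t, 0 ≤ h t) (hf₁ : Measurable f₁) (hf₂ : Measurable f₂)
    (hh : Measurable h) (hfh : ∀ a ∈ Ioi (0 : ℝ), ∀ b ∈ Ioi (0 : ℝ), f₁ a * f₂ b ≤ h √(a * b) ^ 2) :
    (∫⁻ t in Ioi 0, ENNReal.ofReal (f₁ t)) * ∫⁻ t in Ioi 0, ENNReal.ofReal (f₂ t)
      ≤ (∫⁻ t in Ioi 0, ENNReal.ofReal (h t)) ^ 2 := by
  simp only [lintegral_Ioi_eq_lintegral_exp_mul, ← ENNReal.ofReal_mul (exp_pos _).le]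
  refine lintegral_mul_le_sq (fun u => mul_nonneg (exp_pos u).le (hf₁₀ _))
    (fun v => mul_nonneg (exp_pos v).le (hf₂₀ _)) (fun w => mul_nonneg (exp_pos w).le (hh₀ _))
    (measurable_exp.mul (hf₁.comp measurable_exp)) (measurable_exp.mul (hf₂.comp measurable_exp))
    (measurable_exp.mul (hh.comp measurable_exp)) fun u v => ?_
  have hexp : exp u * exp v = exp ((u + v) / 2) ^ 2 := by
    rw [← exp_add, sq, ← exp_add, add_halves]
  calc exp u * f₁ (exp u) * (exp v * f₂ (exp v))
      = exp ((u + v) / 2) ^ 2 * (f₁ (exp u) * f₂ (exp v)) := by rw [← hexp]; ring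
    _ ≤ exp ((u + v) / 2) ^ 2 * h (exp ((u + v) / 2)) ^ 2 := by
      gcongr
      simpa [hexp, sqrt_sq (exp_pos _).le] using hfh _ (exp_pos u) _ (exp_pos v)
    _ = (exp ((u + v) / 2) * h (exp ((u + v) / 2))) ^ 2 := (mul_pow _ _ _).symm

theorem lintegral_Ioi_max_one_sub_sq_rpow {q : ℝ} (hq : 0 < q) :
    ∫⁻ t in Ioi 0, ENNReal.ofReal (max (1 - t ^ 2) 0 ^ q)
      = ENNReal.ofReal ((∫ t in (-1)..1, (1 - t ^ 2) ^ q) / 2) := by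
  have hcont : Continuous fun t : ℝ => (1 - t ^ 2) ^ q :=
    (continuous_const.sub (continuous_pow 2)).rpow_const fun _ => Or.inr hq.le
  have heven : ∫ t in (-1)..1, (1 - t ^ 2) ^ q = 2 * ∫ t in (0 : ℝ)..1, (1 - t ^ 2) ^ q := by
    rw [← intervalIntegral.integral_add_adjacent_intervals (hcont.intervalIntegrable (-1) 0)
      (hcont.intervalIntegrable 0 1), two_mul]
    congr 1
    have h := intervalIntegral.integral_comp_neg (a := 0) (b := 1) fun t : ℝ => (1 - t ^ 2) ^ q
    simp only [neg_sq, neg_zero] at h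
    exact h.symm
  have hvanish : ∫⁻ t in Ioi 1, ENNReal.ofReal (max (1 - t ^ 2) 0 ^ q) = 0 :=
    setLIntegral_eq_zero measurableSet_Ioi fun t (ht : 1 < t) => by
      rw [max_eq_right (by nlinarith), zero_rpow hq.ne', ENNReal.ofReal_zero, Pi.zero_apply]
  have hIoc : ∫⁻ t in Ioc 0 1, ENNReal.ofReal (max (1 - t ^ 2) 0 ^ q)
      = ∫⁻ t in Ioc 0 1, ENNReal.ofReal ((1 - t ^ 2) ^ q) :=
    setLIntegral_congr_fun measurableSet_Ioc fun t ht => by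
      rw [max_eq_left (by nlinarith [ht.1, ht.2])]
  rw [← Ioc_union_Ioi_eq_Ioi zero_le_one, lintegral_union measurableSet_Ioi
    (Ioc_disjoint_Ioi le_rfl), hvanish, add_zero, hIoc, ← ofReal_integral_eq_lintegral_ofReal
    hcont.integrableOn_Ioc (ae_restrict_of_forall_mem measurableSet_Ioc fun t ht =>
      rpow_nonneg (by nlinarith [ht.1, ht.2]) _), heven, mul_div_cancel_left₀ _ two_ne_zero,
    intervalIntegral.integral_of_le zero_le_one]

end Real

/-- One-dimensional Santaló-type lemma: if `φ₁(t₁)φ₂(t₂) ≤ [max(1-t₁t₂,0)]^s` for all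
`t₁,t₂ ≥ 0`, then `∫_{[0,∞)} φ₁ · ∫_{[0,∞)} φ₂ ≤ (κ_s(2)/2)²`,
where `κ_s(2) = ∫_{-1}^1 (1-t²)^{s/2} dt`. -/
theorem onedim_santalo (s : ℝ) (hs : 0 < s)
    (φ₁ φ₂ : ℝ → ℝ) (hφ₁ : ∀ t, 0 ≤ φ₁ t) (hφ₂ : ∀ t, 0 ≤ φ₂ t)
    (hm₁ : Measurable φ₁) (hm₂ : Measurable φ₂)
    (hdual : ∀ t₁ ∈ Set.Ici (0 : ℝ), ∀ t₂ ∈ Set.Ici (0 : ℝ),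
      φ₁ t₁ * φ₂ t₂ ≤ max (1 - t₁ * t₂) 0 ^ s) :
    (∫ t in Set.Ici (0 : ℝ), φ₁ t) * ∫ t in Set.Ici (0 : ℝ), φ₂ t
      ≤ ((∫ t in (-1 : ℝ)..1, (1 - t ^ 2) ^ (s / 2)) / 2) ^ 2 := by
  have hq : 0 < s / 2 := half_pos hs
  set h : ℝ → ℝ := fun t => max (1 - t ^ 2) 0 ^ (s / 2)
  have hh : Continuous h := ((continuous_const.sub (continuous_pow 2)).max
    continuous_const).rpow_const fun _ => Or.inr hq.le
  have hφh : ∀ a ∈ Ioi (0 : ℝ), ∀ b ∈ Ioi (0 : ℝ), φ₁ a * φ₂ b ≤ h √(a * b) ^ 2 := by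
    intro a ha b hb
    calc φ₁ a * φ₂ b ≤ max (1 - a * b) 0 ^ s :=
          hdual a (mem_Ici.2 (le_of_lt ha)) b (mem_Ici.2 (le_of_lt hb))
      _ = h √(a * b) ^ 2 := by
        simp only [h]
        rw [Real.sq_sqrt (mul_pos ha hb).le, ← Real.rpow_natCast,
          ← Real.rpow_mul (le_max_right _ _)]
        norm_num
  have key := Real.lintegral_Ioi_mul_le_sq hφ₁ hφ₂ (fun t => Real.rpow_nonneg (le_max_right _ _) _)
    hm₁ hm₂ hh.measurable hφh
  rw [Real.lintegral_Ioi_max_one_sub_sq_rpow hq] at key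
  have hκ : 0 ≤ ∫ t in (-1 : ℝ)..1, (1 - t ^ 2) ^ (s / 2) :=
    intervalIntegral.integral_nonneg (by norm_num) fun t ht =>
      Real.rpow_nonneg (by nlinarith [ht.1, ht.2]) _
  rw [integral_Ici_eq_integral_Ioi, integral_Ici_eq_integral_Ioi,
    integral_eq_lintegral_of_nonneg_ae (ae_of_all _ hφ₁) hm₁.aestronglyMeasurable,
    integral_eq_lintegral_of_nonneg_ae (ae_of_all _ hφ₂) hm₂.aestronglyMeasurable, ← toReal_mul]
  calc _ ≤ (ENNReal.ofReal ((∫ t in (-1 : ℝ)..1, (1 - t ^ 2) ^ (s / 2)) / 2) ^ 2).toReal :=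
        toReal_mono (by finiteness) key
    _ = _ := by rw [toReal_pow, toReal_ofReal (by positivity)]
end

section
/- Fix s > 0. Let f : ℝ → [0,∞) be a Borel function with finite integral such that ∫_{[0,∞)} f = λ ∫_ℝ f for some λ ∈ (0,1). Then for any Borel g : ℝ → [0,∞) satisfying f(t₁)g(t₂) ≤ [max(1 - t₁t₂, 0)]^s for all t₁, t₂ ∈ ℝ, one has ∫_ℝ f · ∫_ℝ g ≤ κ_s(2)² / (4λ(1-λ)), where κ_s(2) = ∫_{-1}^1 (1-t²)^{s/2} dt. -/
/-!
Split `∫ g` at the origin. On each half-line the substitution `x = eᵃ` turns the polarity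
condition `f(x) g(y) ≤ (1 - xy)₊ˢ` into the hypothesis `√(F(a) G(b)) ≤ R((a + b)/2)` of the
Prékopa–Leindler inequality for `F(a) = eᵃ f(eᵃ)`, `G(b) = eᵇ g(eᵇ)` and
`R(c) = eᶜ (1 - e²ᶜ)₊^{s/2}`, so that `∫₀^∞ f · ∫₀^∞ g ≤ (κ/2)²` with `κ = κ_s(2)`, and likewise
on the negative half-line. Since `∫₀^∞ f = λ ∫ f` and `∫_{-∞}^0 f = (1 - λ) ∫ f`, adding the two
bounds on `∫ g` gives `∫ f · ∫ g ≤ (κ/2)² (1/λ + 1/(1 - λ)) = κ² / (4λ(1 - λ))`.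

Prékopa–Leindler itself follows, after truncating `F`, `G` and rescaling them to a common
supremum, from the layer-cake formula and the one-dimensional Brunn–Minkowski inequality
`|A| + |B| ≤ |A + B|`.
-/

open MeasureTheory Set
open scoped ENNReal NNReal Pointwise

theorem volume_add_volume_le_volume_add_of_isCompact {K L : Set ℝ} (hK : IsCompact K)
    (hL : IsCompact L) (hKne : K.Nonempty) (hLne : L.Nonempty) :
    volume K + volume L ≤ volume (K + L) := by
  set a := sInf K
  set b := sSup L
  have ha : a ∈ K := hK.sInf_mem hKne
  have hb : b ∈ L := hL.sSup_mem hLne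
  -- `b +ᵥ K` and `a +ᵥ L` both lie in `K + L` and meet only at `a + b`
  have hinter : (b +ᵥ K) ∩ (a +ᵥ L) ⊆ {a + b} := by
    rintro _ ⟨⟨k, hk, rfl⟩, m, hm, he⟩
    have : a ≤ k := csInf_le hK.bddBelow hk
    have : m ≤ b := le_csSup hL.bddAbove hm
    simp only [vadd_eq_add, mem_singleton_iff] at he ⊢
    linarith
  calc volume K + volume L = volume (b +ᵥ K) + volume (a +ᵥ L) := by
        rw [measure_vadd, measure_vadd]
    _ = volume ((b +ᵥ K) ∪ (a +ᵥ L)) := by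
        rw [← measure_union_add_inter _ (hL.measurableSet.const_vadd a),
          measure_mono_null hinter (measure_singleton _), add_zero]
    _ ≤ volume (K + L) := by
        refine measure_mono (union_subset ?_ ?_)
        · rw [add_comm]; exact vadd_set_subset_vadd hb
        · exact vadd_set_subset_vadd ha

theorem volume_add_volume_le_volume_add {A B : Set ℝ} (hA : MeasurableSet A)
    (hB : MeasurableSet B) (hAne : A.Nonempty) (hBne : B.Nonempty) :
    volume A + volume B ≤ volume (A + B) := by
  obtain ⟨a, ha⟩ := hAne
  obtain ⟨b, hb⟩ := hBne
  rw [hA.measure_eq_iSup_isCompact, hB.measure_eq_iSup_isCompact]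
  simp_rw [iSup_and']
  refine ENNReal.biSup_add_biSup_le' ⟨∅, empty_subset _, isCompact_empty⟩
    ⟨∅, empty_subset _, isCompact_empty⟩ ?_
  rintro K ⟨hKA, hK⟩ L ⟨hLB, hL⟩
  calc volume K + volume L ≤ volume (insert a K) + volume (insert b L) := by
        gcongr <;> exact subset_insert _ _
    _ ≤ volume (insert a K + insert b L) :=
        volume_add_volume_le_volume_add_of_isCompact (hK.insert a) (hL.insert b)
          (insert_nonempty _ _) (insert_nonempty _ _)
    _ ≤ volume (A + B) :=
        measure_mono (add_subset_add (insert_subset ha hKA) (insert_subset hb hLB))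

theorem ENNReal.mul_le_sq_of_add_le_two_mul_s18 {x y r : ℝ≥0∞} (h : x + y ≤ 2 * r) :
    x * y ≤ r ^ 2 := by
  rcases eq_or_ne r ⊤ with rfl | hr
  · simp
  have hxy : x + y ≠ ⊤ := ne_top_of_le_ne_top (by finiteness) h
  lift x to ℝ≥0 using (ENNReal.add_ne_top.1 hxy).1
  lift y to ℝ≥0 using (ENNReal.add_ne_top.1 hxy).2
  lift r to ℝ≥0 using hr
  have h' : (x : ℝ) + y ≤ 2 * r := mod_cast h
  have : (x : ℝ) * y ≤ (r : ℝ) ^ 2 := by nlinarith [sq_nonneg ((x : ℝ) - y)]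
  exact_mod_cast this

theorem Real.min_le_sqrt_mul {a b : ℝ} (ha : 0 ≤ a) (hb : 0 ≤ b) : min a b ≤ √(a * b) :=
  Real.le_sqrt_of_sq_le (by
    rw [sq]; exact mul_le_mul (min_le_left a b) (min_le_right a b) (le_min ha hb) ha)

theorem lintegral_add_lintegral_le_of_isLUB {F G R : ℝ → ℝ} {m : ℝ}
    (hmF : Measurable F) (hmG : Measurable G) (hmR : Measurable R)
    (hF0 : ∀ x, 0 ≤ F x) (hG0 : ∀ y, 0 ≤ G y)
    (hF : IsLUB (range F) m) (hG : IsLUB (range G) m)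
    (hFGR : ∀ x y, min (F x) (G y) ≤ R ((x + y) / 2)) :
    (∫⁻ x, ENNReal.ofReal (F x)) + ∫⁻ y, ENNReal.ofReal (G y)
      ≤ 2 * ∫⁻ z, ENNReal.ofReal (R z) := by
  have hR0 : ∀ z, 0 ≤ R z := fun z => by
    simpa using (le_min (hF0 z) (hG0 z)).trans (hFGR z z)
  have level : ∀ t ∈ Ioi (0 : ℝ),
      volume {x | t < F x} + volume {y | t < G y} ≤ 2 * volume {z | t < R z} := by
    intro t _
    rcases lt_or_ge t m with htm | hmt
    · obtain ⟨_, ⟨x, rfl⟩, hx, -⟩ := hF.exists_between htm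
      obtain ⟨_, ⟨y, rfl⟩, hy, -⟩ := hG.exists_between htm
      calc volume {x | t < F x} + volume {y | t < G y}
          ≤ volume ({x | t < F x} + {y | t < G y}) :=
            volume_add_volume_le_volume_add (measurableSet_lt measurable_const hmF)
              (measurableSet_lt measurable_const hmG) ⟨x, hx⟩ ⟨y, hy⟩
        _ ≤ volume ((2 : ℝ) • {z | t < R z}) := by
            refine measure_mono ?_
            rintro _ ⟨x, hx, y, hy, rfl⟩
            rw [mem_smul_set_iff_inv_smul_mem₀ two_ne_zero, smul_eq_mul, inv_mul_eq_div]
            exact (lt_min hx hy).trans_le (hFGR x y)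
        _ = 2 * volume {z | t < R z} := by rw [Measure.addHaar_smul]; norm_num
    · have hFt : {x | t < F x} = ∅ :=
        eq_empty_of_forall_notMem fun x hx => (hF.1 (mem_range_self x)).trans hmt |>.not_gt hx
      have hGt : {y | t < G y} = ∅ :=
        eq_empty_of_forall_notMem fun y hy => (hG.1 (mem_range_self y)).trans hmt |>.not_gt hy
      simp [hFt, hGt]
  have antitone_level : Antitone fun t : ℝ => volume {x | t < F x} :=
    fun _ _ hst => measure_mono fun _ hx => hst.trans_lt hx
  rw [lintegral_eq_lintegral_meas_lt volume (ae_of_all _ hF0) hmF.aemeasurable,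
    lintegral_eq_lintegral_meas_lt volume (ae_of_all _ hG0) hmG.aemeasurable,
    lintegral_eq_lintegral_meas_lt volume (ae_of_all _ hR0) hmR.aemeasurable,
    ← lintegral_add_left antitone_level.measurable, ← lintegral_const_mul' _ _ ENNReal.ofNat_ne_top]
  exact setLIntegral_mono' measurableSet_Ioi level

theorem lintegral_mul_lintegral_le_sq_of_bddAbove {F G R : ℝ → ℝ}
    (hmF : Measurable F) (hmG : Measurable G) (hmR : Measurable R)
    (hF0 : ∀ x, 0 ≤ F x) (hG0 : ∀ y, 0 ≤ G y)
    (hFb : BddAbove (range F)) (hGb : BddAbove (range G))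
    (hFGR : ∀ x y, √(F x * G y) ≤ R ((x + y) / 2)) :
    (∫⁻ x, ENNReal.ofReal (F x)) * ∫⁻ y, ENNReal.ofReal (G y)
      ≤ (∫⁻ z, ENNReal.ofReal (R z)) ^ 2 := by
  set a := sSup (range F)
  set b := sSup (range G)
  have ha : IsLUB (range F) a := isLUB_csSup (range_nonempty F) hFb
  have hb : IsLUB (range G) b := isLUB_csSup (range_nonempty G) hGb
  rcases (ha.1 (mem_range_self 0)).trans' (hF0 0) |>.eq_or_lt with ha0 | ha0
  · have : ∀ x, F x = 0 := fun x => le_antisymm (ha0 ▸ ha.1 (mem_range_self x)) (hF0 x)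
    simp [this]
  rcases (hb.1 (mem_range_self 0)).trans' (hG0 0) |>.eq_or_lt with hb0 | hb0
  · have : ∀ y, G y = 0 := fun y => le_antisymm (hb0 ▸ hb.1 (mem_range_self y)) (hG0 y)
    simp [this]
  -- rescale `F` and `G` by reciprocal factors so that both have supremum `√(a b)`
  set c := √(b / a)
  have hc : 0 < c := Real.sqrt_pos.2 (div_pos hb0 ha0)
  have hc' : 0 < c⁻¹ := inv_pos.2 hc
  have hsup : c⁻¹ * b = c * a := by
    have hcc : c * c = b / a := Real.mul_self_sqrt (div_pos hb0 ha0).le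
    rw [inv_mul_eq_iff_eq_mul₀ hc.ne', ← mul_assoc, hcc, div_mul_cancel₀ b ha0.ne']
  have hFc : IsLUB (range fun x => c * F x) (c * a) := by
    simpa only [← range_comp, Function.comp_def] using ha.mul_left hc.le
  have hGc : IsLUB (range fun y => c⁻¹ * G y) (c * a) := by
    simpa only [← range_comp, Function.comp_def, hsup] using hb.mul_left hc'.le
  have hsum := lintegral_add_lintegral_le_of_isLUB (hmF.const_mul c) (hmG.const_mul c⁻¹) hmR
    (fun x => mul_nonneg hc.le (hF0 x)) (fun y => mul_nonneg hc'.le (hG0 y)) hFc hGc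
    fun x y => by
      refine (Real.min_le_sqrt_mul (mul_nonneg hc.le (hF0 x)) (mul_nonneg hc'.le (hG0 y))).trans ?_
      rw [mul_mul_mul_comm, mul_inv_cancel₀ hc.ne', one_mul]
      exact hFGR x y
  calc (∫⁻ x, ENNReal.ofReal (F x)) * ∫⁻ y, ENNReal.ofReal (G y)
      = (ENNReal.ofReal c * ∫⁻ x, ENNReal.ofReal (F x))
          * (ENNReal.ofReal c⁻¹ * ∫⁻ y, ENNReal.ofReal (G y)) := by
        rw [mul_mul_mul_comm, ← ENNReal.ofReal_mul hc.le, mul_inv_cancel₀ hc.ne',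
          ENNReal.ofReal_one, one_mul]
    _ = (∫⁻ x, ENNReal.ofReal (c * F x)) * ∫⁻ y, ENNReal.ofReal (c⁻¹ * G y) := by
        simp_rw [ENNReal.ofReal_mul hc.le, ENNReal.ofReal_mul hc'.le,
          lintegral_const_mul' _ _ ENNReal.ofReal_ne_top]
    _ ≤ (∫⁻ z, ENNReal.ofReal (R z)) ^ 2 := ENNReal.mul_le_sq_of_add_le_two_mul_s18 hsum

theorem ENNReal.ofReal_eq_iSup_ofReal_min_natCast (x : ℝ) :
    ENNReal.ofReal x = ⨆ n : ℕ, ENNReal.ofReal (min x n) :=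
  le_antisymm (le_iSup_of_le ⌈x⌉₊ (by rw [min_eq_left (Nat.le_ceil x)]))
    (iSup_le fun _ => ENNReal.ofReal_le_ofReal (min_le_left _ _))

theorem lintegral_ofReal_eq_iSup_lintegral_ofReal_min {H : ℝ → ℝ} (hH : Measurable H) :
    ∫⁻ x, ENNReal.ofReal (H x) = ⨆ n : ℕ, ∫⁻ x, ENNReal.ofReal (min (H x) n) := by
  simp_rw [ENNReal.ofReal_eq_iSup_ofReal_min_natCast (H _)]
  refine lintegral_iSup (fun n => (hH.min measurable_const).ennreal_ofReal) fun m n hmn x => ?_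
  dsimp only
  gcongr

/-- **Prékopa–Leindler inequality** on `ℝ` with parameter `1/2`. -/
theorem lintegral_mul_lintegral_le_sq {F G R : ℝ → ℝ}
    (hmF : Measurable F) (hmG : Measurable G) (hmR : Measurable R)
    (hF0 : ∀ x, 0 ≤ F x) (hG0 : ∀ y, 0 ≤ G y)
    (hFGR : ∀ x y, √(F x * G y) ≤ R ((x + y) / 2)) :
    (∫⁻ x, ENNReal.ofReal (F x)) * ∫⁻ y, ENNReal.ofReal (G y)
      ≤ (∫⁻ z, ENNReal.ofReal (R z)) ^ 2 := by
  have truncated (n : ℕ) :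
      (∫⁻ x, ENNReal.ofReal (min (F x) n)) * ∫⁻ y, ENNReal.ofReal (min (G y) n)
        ≤ (∫⁻ z, ENNReal.ofReal (R z)) ^ 2 :=
    lintegral_mul_lintegral_le_sq_of_bddAbove (hmF.min measurable_const)
      (hmG.min measurable_const) hmR (fun x => le_min (hF0 x) n.cast_nonneg)
      (fun y => le_min (hG0 y) n.cast_nonneg) ⟨n, forall_mem_range.2 fun _ => min_le_right _ _⟩
      ⟨n, forall_mem_range.2 fun _ => min_le_right _ _⟩ fun x y =>
        (Real.sqrt_le_sqrt (mul_le_mul (min_le_left _ _) (min_le_left _ _)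
          (le_min (hG0 y) n.cast_nonneg) (hF0 x))).trans (hFGR x y)
  rw [lintegral_ofReal_eq_iSup_lintegral_ofReal_min hmF,
    lintegral_ofReal_eq_iSup_lintegral_ofReal_min hmG, ENNReal.iSup_mul]
  refine iSup_le fun m => ?_
  rw [ENNReal.mul_iSup]
  refine iSup_le fun n => (?_ : _ ≤ _).trans (truncated (max m n))
  gcongr with x y
  · exact le_max_left m n
  · exact le_max_right m n

theorem setLIntegral_Ioi_eq_lintegral_exp_mul_comp_exp (φ : ℝ → ℝ) :
    ∫⁻ x in Ioi 0, ENNReal.ofReal (φ x) = ∫⁻ a, ENNReal.ofReal (Real.exp a * φ (Real.exp a)) := by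
  rw [← Real.range_exp, ← image_univ, lintegral_image_eq_lintegral_abs_deriv_mul MeasurableSet.univ
    (fun x _ => (Real.hasDerivAt_exp x).hasDerivWithinAt) Real.exp_injective.injOn,
    Measure.restrict_univ]
  simp_rw [abs_of_pos (Real.exp_pos _), ENNReal.ofReal_mul (Real.exp_pos _).le]

theorem setLIntegral_Ioi_mul_setLIntegral_Ioi_le_sq {f g h : ℝ → ℝ}
    (hmf : Measurable f) (hmg : Measurable g) (hmh : Measurable h)
    (hf0 : ∀ x, 0 ≤ f x) (hg0 : ∀ y, 0 ≤ g y)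
    (hfgh : ∀ x y, 0 < x → 0 < y → √(f x * g y) ≤ h √(x * y)) :
    (∫⁻ x in Ioi 0, ENNReal.ofReal (f x)) * ∫⁻ y in Ioi 0, ENNReal.ofReal (g y)
      ≤ (∫⁻ z in Ioi 0, ENNReal.ofReal (h z)) ^ 2 := by
  simp_rw [setLIntegral_Ioi_eq_lintegral_exp_mul_comp_exp]
  refine lintegral_mul_lintegral_le_sq (by fun_prop) (by fun_prop) (by fun_prop)
    (fun a => mul_nonneg (Real.exp_pos a).le (hf0 _))
    (fun b => mul_nonneg (Real.exp_pos b).le (hg0 _)) fun a b => ?_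
  have hexp : Real.exp a * Real.exp b = Real.exp ((a + b) / 2) ^ 2 := by
    rw [← Real.exp_add, ← Real.exp_nat_mul]; ring_nf
  calc √(Real.exp a * f (Real.exp a) * (Real.exp b * g (Real.exp b)))
      = Real.exp ((a + b) / 2) * √(f (Real.exp a) * g (Real.exp b)) := by
        rw [mul_mul_mul_comm, hexp, Real.sqrt_mul' _ (mul_nonneg (hf0 _) (hg0 _)),
          Real.sqrt_sq (Real.exp_pos _).le]
    _ ≤ Real.exp ((a + b) / 2) * h (Real.exp ((a + b) / 2)) := by
        gcongr
        simpa only [hexp, Real.sqrt_sq (Real.exp_pos _).le]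
          using hfgh _ _ (Real.exp_pos a) (Real.exp_pos b)

/-- The square root of the polarity bound `(1 - x y)₊ ^ s` on the diagonal `x = y = z`. -/
noncomputable def polarProfile (s z : ℝ) : ℝ := max (1 - z ^ 2) 0 ^ (s / 2)

section polarProfile

variable {s : ℝ}

theorem polarProfile_sqrt_mul {x y : ℝ} (hxy : 0 ≤ x * y) :
    polarProfile s √(x * y) = √(max (1 - x * y) 0 ^ s) := by
  rw [polarProfile, Real.sq_sqrt hxy, Real.sqrt_eq_rpow, ← Real.rpow_mul (le_max_right _ _),
    div_eq_mul_one_div]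

theorem polarProfile_nonneg (z : ℝ) : 0 ≤ polarProfile s z :=
  Real.rpow_nonneg (le_max_right _ _) _

theorem polarProfile_of_sq_le_one {z : ℝ} (hz : z ^ 2 ≤ 1) :
    polarProfile s z = (1 - z ^ 2) ^ (s / 2) := by
  rw [polarProfile, max_eq_left (sub_nonneg.2 hz)]

theorem polarProfile_of_one_le_sq (hs : s ≠ 0) {z : ℝ} (hz : 1 ≤ z ^ 2) : polarProfile s z = 0 := by
  rw [polarProfile, max_eq_right (sub_nonpos.2 hz), Real.zero_rpow (div_ne_zero hs two_ne_zero)]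

theorem continuous_polarProfile (hs : 0 ≤ s) : Continuous (polarProfile s) :=
  (by fun_prop : Continuous fun z : ℝ => max (1 - z ^ 2) 0).rpow_const
    fun _ => Or.inr (div_nonneg hs zero_le_two)

theorem integrable_polarProfile (hs : 0 < s) : Integrable (polarProfile s) := by
  refine (continuous_polarProfile hs.le).integrable_of_hasCompactSupport
    (HasCompactSupport.intro (isCompact_Icc (a := -1) (b := 1)) fun z hz => ?_)
  refine polarProfile_of_one_le_sq hs.ne' ?_
  rw [mem_Icc, not_and_or, not_le, not_le] at hz
  rcases hz with hz | hz <;> nlinarith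

theorem integral_Ioi_polarProfile (hs : 0 < s) :
    ∫ z in Ioi 0, polarProfile s z = ∫ t in (0 : ℝ)..1, (1 - t ^ 2) ^ (s / 2) := by
  rw [intervalIntegral.integral_of_le zero_le_one,
    setIntegral_eq_of_subset_of_forall_sdiff_eq_zero measurableSet_Ioi Ioc_subset_Ioi_self
      fun z hz => polarProfile_of_one_le_sq hs.ne' ?_]
  · refine setIntegral_congr_fun measurableSet_Ioc fun z ⟨hz0, hz1⟩ => ?_
    exact polarProfile_of_sq_le_one (by nlinarith)
  · obtain ⟨hz0, hz1⟩ := hz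
    rw [mem_Ioi] at hz0
    rw [mem_Ioc, not_and, not_le] at hz1
    nlinarith [hz1 hz0]

end polarProfile

theorem integral_Ioi_mul_integral_Ioi_le_of_le_max_one_sub_mul_rpow {s : ℝ} (hs : 0 < s)
    {f g : ℝ → ℝ} (hmf : Measurable f) (hmg : Measurable g)
    (hf0 : ∀ x, 0 ≤ f x) (hg0 : ∀ y, 0 ≤ g y)
    (hfg : ∀ x y, 0 < x → 0 < y → f x * g y ≤ max (1 - x * y) 0 ^ s) :
    (∫ x in Ioi 0, f x) * ∫ y in Ioi 0, g y ≤ (∫ t in (0 : ℝ)..1, (1 - t ^ 2) ^ (s / 2)) ^ 2 := by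
  have hprofile := integrable_polarProfile hs
  have hlint := setLIntegral_Ioi_mul_setLIntegral_Ioi_le_sq hmf hmg
    (continuous_polarProfile hs.le).measurable hf0 hg0 fun x y hx hy => by
      rw [polarProfile_sqrt_mul (mul_pos hx hy).le]
      exact Real.sqrt_le_sqrt (hfg x y hx hy)
  rw [integral_eq_lintegral_of_nonneg_ae (ae_of_all _ hf0) hmf.aestronglyMeasurable,
    integral_eq_lintegral_of_nonneg_ae (ae_of_all _ hg0) hmg.aestronglyMeasurable,
    ← integral_Ioi_polarProfile hs, integral_eq_lintegral_of_nonneg_ae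
      (ae_of_all _ polarProfile_nonneg) hprofile.aestronglyMeasurable.restrict,
    ← ENNReal.toReal_mul, ← ENNReal.toReal_pow]
  exact ENNReal.toReal_mono (ENNReal.pow_ne_top hprofile.integrableOn.lintegral_lt_top.ne) hlint

theorem intervalIntegral.integral_neg_self_self_eq_two_mul_of_even {φ : ℝ → ℝ}
    (hφ : Continuous φ) (heven : ∀ t, φ (-t) = φ t) (a : ℝ) :
    ∫ t in -a..a, φ t = 2 * ∫ t in 0..a, φ t := by
  rw [← intervalIntegral.integral_add_adjacent_intervals (b := 0) (hφ.intervalIntegrable _ _)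
    (hφ.intervalIntegrable _ _), two_mul]
  congr 1
  simpa only [heven, neg_zero] using (intervalIntegral.integral_comp_neg (a := 0) (b := a) φ).symm

/-- One-dimensional Santaló inequality with non-central polarity point:
if `∫_{[0,∞)} f = λ ∫_ℝ f` and `f(t₁)g(t₂) ≤ [max(1-t₁t₂,0)]^s` for all `t₁,t₂ ∈ ℝ`,
then `∫_ℝ f · ∫_ℝ g ≤ κ_s(2)²/(4λ(1-λ))`. -/
theorem onedim_santalo_lambda (s : ℝ) (hs : 0 < s)
    (f : ℝ → ℝ) (hf : ∀ t, 0 ≤ f t) (hmf : Measurable f) (hint : Integrable f)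
    (l : ℝ) (hl : l ∈ Set.Ioo (0 : ℝ) 1)
    (hlf : ∫ t in Set.Ici (0 : ℝ), f t = l * ∫ t, f t)
    (g : ℝ → ℝ) (hg : ∀ t, 0 ≤ g t) (hmg : Measurable g)
    (hdual : ∀ t₁ t₂ : ℝ, f t₁ * g t₂ ≤ max (1 - t₁ * t₂) 0 ^ s) :
    (∫ t, f t) * ∫ t, g t
      ≤ (∫ t in (-1 : ℝ)..1, (1 - t ^ 2) ^ (s / 2)) ^ 2 / (4 * l * (1 - l)) := by
  obtain ⟨hl0, hl1⟩ := hl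
  have hden : 0 < 4 * l * (1 - l) := by nlinarith
  by_cases hgi : Integrable g
  swap
  · rw [integral_undef hgi, mul_zero]
    positivity
  rw [intervalIntegral.integral_neg_self_self_eq_two_mul_of_even
      ((by fun_prop : Continuous fun t : ℝ => 1 - t ^ 2).rpow_const
        fun _ => Or.inr (div_nonneg hs.le zero_le_two)) (fun t => by rw [neg_sq]),
    ← intervalIntegral.integral_Iic_add_Ioi (b := 0) hgi.integrableOn hgi.integrableOn,
    le_div_iff₀ hden]
  set K := ∫ t in (0 : ℝ)..1, (1 - t ^ 2) ^ (s / 2)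
  have hf_Ioi : ∫ t in Ioi 0, f t = l * ∫ t, f t := by rwa [← integral_Ici_eq_integral_Ioi]
  have hf_Iic : ∫ t in Iic 0, f t = (1 - l) * ∫ t, f t := by
    linarith [intervalIntegral.integral_Iic_add_Ioi (b := 0) hint.integrableOn hint.integrableOn]
  have hpos : (l * ∫ t, f t) * ∫ t in Ioi 0, g t ≤ K ^ 2 := by
    rw [← hf_Ioi]
    exact integral_Ioi_mul_integral_Ioi_le_of_le_max_one_sub_mul_rpow hs hmf hmg hf hg
      fun x y _ _ => hdual x y
  have hneg : ((1 - l) * ∫ t, f t) * ∫ t in Iic 0, g t ≤ K ^ 2 := by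
    rw [← hf_Iic, ← neg_zero, ← integral_comp_neg_Ioi, ← integral_comp_neg_Ioi]
    exact integral_Ioi_mul_integral_Ioi_le_of_le_max_one_sub_mul_rpow hs
      (hmf.comp measurable_neg) (hmg.comp measurable_neg) (fun x => hf (-x)) (fun y => hg (-y))
      fun x y _ _ => by simpa only [neg_mul_neg] using hdual (-x) (-y)
  nlinarith [mul_le_mul_of_nonneg_left hpos (by linarith : 0 ≤ 4 * (1 - l)),
    mul_le_mul_of_nonneg_left hneg (by linarith : 0 ≤ 4 * l)]
end
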